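/- Let f : {-1,1}^n → {-1,1} and let 𝒞 = {C₁, …, C_t} be an unambiguous certificate for f, i.e. a partition of {-1,1}^n into subcubes such that f is constant on each C_i, where C_i is the set of points agreeing with a partial assignment τ_i fixing |τ_i| coordinates. Then the Fourier entropy satisfies H(f̂²) ≤ 2·aUC(f,𝒞), where aUC(f,𝒞) = Σ_{i=1}^{t} 2^{−|τ_i|}·|τ_i| is the expected number of coordinates fixed by the certificate containing a uniformly random input. In particular, H(f̂²) ≤ 2·aUC(f), where aUC(f) is the minimum of aUC(f,𝒞) over all unambiguous certificates 𝒞 for f. -/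

import Mathlib

open Finset

/-- The real value (`1` or `-1`) encoded by a Boolean. -/
noncomputable def bsgn (b : Bool) : ℝ := if b then 1 else -1

/-- The character `χ_S(x) = ∏_{i ∈ S} x_i` on the hypercube `{-1,1}^n`. -/
noncomputable def chi {n : ℕ} (S : Finset (Fin n)) (x : Fin n → Bool) : ℝ :=
  ∏ i ∈ S, bsgn (x i)

/-- The Fourier coefficient `f̂(S) = E_x [f(x)·χ_S(x)]`. -/
noncomputable def fCoeff {n : ℕ} (f : (Fin n → Bool) → ℝ) (S : Finset (Fin n)) : ℝ :=
  (∑ x : Fin n → Bool, f x * chi S x) / 2 ^ n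

/-- The Fourier (Shannon) entropy `H(f̂²) = Σ_S f̂(S)² log₂(1/f̂(S)²)`. -/
noncomputable def fEntropy {n : ℕ} (f : (Fin n → Bool) → ℝ) : ℝ :=
  ∑ S : Finset (Fin n), (fCoeff f S) ^ 2 * Real.logb 2 (1 / (fCoeff f S) ^ 2)

/-- The Fourier min-entropy `H_∞(f̂²) = min_{S : f̂(S) ≠ 0} log₂(1/f̂(S)²)`. -/
noncomputable def fMinEntropy {n : ℕ} (f : (Fin n → Bool) → ℝ) : ℝ :=
  sInf {y : ℝ | ∃ S : Finset (Fin n),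
    fCoeff f S ≠ 0 ∧ y = Real.logb 2 (1 / (fCoeff f S) ^ 2)}

/-- The total influence `Inf(f) = Σ_S |S|·f̂(S)²`. -/
noncomputable def totalInf {n : ℕ} (f : (Fin n → Bool) → ℝ) : ℝ :=
  ∑ S : Finset (Fin n), (S.card : ℝ) * (fCoeff f S) ^ 2

/-- `f` is a Boolean (`±1`-valued) function. -/
def IsBooleanFunc {n : ℕ} (f : (Fin n → Bool) → ℝ) : Prop := ∀ x, f x = 1 ∨ f x = -1

/-!
Write `f = Σ_i b_i 1_{C_i}`. The Fourier coefficients of the indicator of a subcube give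
`f̂(S) = Σ_{i : S ⊆ dom i} b_i χ_S(val i) 2^{-|dom i|}`, so `f̂(S) = 0` unless some cube fixes
all of `S`. The weights `q(S) = Σ_{i : S ⊆ dom i} 4^{-|dom i|}` sum to `Σ_i 2^{-|dom i|} = 1`,
so Gibbs' inequality bounds `H(f̂²)` by `Σ_S f̂(S)² log₂(1/q(S)) ≤ 2 Σ_S f̂(S)² m(S)`, where
`m(S)` is the least codimension of a cube fixing `S`. For each level `k`, the sets `S` with
`m(S) > k` only see cubes of codimension `> k`, so Bessel's inequality for `f` restricted to
those cubes gives `Σ_{m(S) > k} f̂(S)² ≤ Σ_{|dom i| > k} 2^{-|dom i|}`; summing over `k` gives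
`Σ_S f̂(S)² m(S) ≤ aUC(f, 𝒞)`.
-/

lemma one_add_bsgn_mul_bsgn (a b : Bool) : 1 + bsgn a * bsgn b = if a = b then 2 else 0 := by
  cases a <;> cases b <;> norm_num [bsgn]

lemma bsgn_not (b : Bool) : bsgn (!b) = -bsgn b := by
  cases b <;> simp [bsgn]

section Fourier

variable {n : ℕ}

lemma chi_update_not {S : Finset (Fin n)} {j : Fin n} (hj : j ∈ S) (x : Fin n → Bool) :
    chi S (Function.update x j (!x j)) = -chi S x := by
  rw [chi, ← mul_prod_erase S _ hj, chi, ← mul_prod_erase S _ hj, Function.update_self,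
    bsgn_not, neg_mul]
  congr 2
  refine prod_congr rfl fun i hi => ?_
  rw [Function.update_of_ne (ne_of_mem_erase hi)]

lemma sum_chi_mul_chi (x y : Fin n → Bool) :
    ∑ S : Finset (Fin n), chi S x * chi S y = if x = y then 2 ^ n else 0 := by
  calc ∑ S : Finset (Fin n), chi S x * chi S y
      = ∏ j, (1 + bsgn (x j) * bsgn (y j)) := by
        simp only [prod_one_add, powerset_univ, chi, prod_mul_distrib]
    _ = if x = y then 2 ^ n else 0 := by
        simp only [one_add_bsgn_mul_bsgn, prod_ite_zero, prod_const, card_univ,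
          Fintype.card_fin, mem_univ, forall_const, funext_iff]

theorem sum_fCoeff_sq (g : (Fin n → Bool) → ℝ) :
    ∑ S, fCoeff g S ^ 2 = (∑ x, g x ^ 2) / 2 ^ n := by
  calc ∑ S, fCoeff g S ^ 2
      = (∑ x, ∑ y, g x * g y * ∑ S : Finset (Fin n), chi S x * chi S y) / (2 ^ n) ^ 2 := by
        simp only [fCoeff, div_pow]
        rw [← sum_div]
        congr 1
        simp only [sq, sum_mul_sum]
        rw [sum_comm]
        refine sum_congr rfl fun x _ => ?_
        rw [sum_comm]
        refine sum_congr rfl fun y _ => ?_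
        rw [mul_sum]
        exact sum_congr rfl fun S _ => by ring
    _ = (∑ x, g x ^ 2) / 2 ^ n := by
        simp only [sum_chi_mul_chi, mul_ite, mul_zero, sum_ite_eq, mem_univ, if_true,
          ← sum_mul]
        field_simp

theorem sum_fCoeff_sq_le (g : (Fin n → Bool) → ℝ) (A : Finset (Finset (Fin n))) :
    ∑ S ∈ A, fCoeff g S ^ 2 ≤ (∑ x, g x ^ 2) / 2 ^ n :=
  sum_fCoeff_sq g ▸ sum_le_sum_of_subset_of_nonneg (subset_univ A) fun _ _ _ => sq_nonneg _

end Fourier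

lemma mul_logb_inv_le {b p q : ℝ} (hb : 1 < b) (hp : 0 ≤ p) (hq : 0 ≤ q) (hpq : p ≠ 0 → q ≠ 0) :
    p * Real.logb b (1 / p) ≤ p * Real.logb b (1 / q) + (q - p) / Real.log b := by
  have hlogb : 0 < Real.log b := Real.log_pos hb
  rcases hp.eq_or_lt with rfl | hp
  · simpa using div_nonneg hq hlogb.le
  have hq : 0 < q := hq.lt_of_ne' (hpq hp.ne')
  have key : p * Real.log (q / p) ≤ q - p := by
    have := mul_le_mul_of_nonneg_left (Real.log_le_sub_one_of_pos (div_pos hq hp)) hp.le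
    rwa [mul_sub, mul_div_cancel₀ _ hp.ne', mul_one] at this
  rw [one_div, one_div, Real.logb_inv, Real.logb_inv, ← sub_le_iff_le_add',
    show p * -Real.logb b p - p * -Real.logb b q = p * Real.logb b (q / p) by
      rw [Real.logb_div hq.ne' hp.ne']; ring,
    Real.logb, ← mul_div_assoc]
  exact div_le_div_of_nonneg_right key hlogb.le

theorem sum_mul_logb_inv_le {ι : Type*} (s : Finset ι) {b : ℝ} (hb : 1 < b) {p q : ι → ℝ}
    (hp : ∀ i ∈ s, 0 ≤ p i) (hq : ∀ i ∈ s, 0 ≤ q i) (hpq : ∀ i ∈ s, p i ≠ 0 → q i ≠ 0)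
    (hsum : ∑ i ∈ s, q i ≤ ∑ i ∈ s, p i) :
    ∑ i ∈ s, p i * Real.logb b (1 / p i) ≤ ∑ i ∈ s, p i * Real.logb b (1 / q i) := by
  calc ∑ i ∈ s, p i * Real.logb b (1 / p i)
      ≤ ∑ i ∈ s, (p i * Real.logb b (1 / q i) + (q i - p i) / Real.log b) :=
        sum_le_sum fun i hi => mul_logb_inv_le hb (hp i hi) (hq i hi) (hpq i hi)
    _ ≤ ∑ i ∈ s, p i * Real.logb b (1 / q i) := by
        rw [sum_add_distrib, ← sum_div, sum_sub_distrib, add_le_iff_nonpos_right]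
        exact div_nonpos_of_nonpos_of_nonneg (sub_nonpos.2 hsum) (Real.log_pos hb).le

lemma exists_eq_iff_of_existsUnique {α β : Type*} {P : α → β → Prop}
    (h : ∀ a, ∃! b, P a b) : ∃ g : α → β, ∀ a b, g a = b ↔ P a b := by
  choose g hg huniq using h
  exact ⟨g, fun a b => ⟨fun hb => hb ▸ hg a, fun hb => (huniq a b hb).symm⟩⟩

section Subcube

variable {n : ℕ}

def subcube (D : Finset (Fin n)) (v : Fin n → Bool) : Finset (Fin n → Bool) :=
  {x | ∀ j ∈ D, x j = v j}

@[simp]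
lemma mem_subcube {D : Finset (Fin n)} {v x : Fin n → Bool} :
    x ∈ subcube D v ↔ ∀ j ∈ D, x j = v j := by
  simp [subcube]

lemma subcube_eq_piFinset (D : Finset (Fin n)) (v : Fin n → Bool) :
    subcube D v = Fintype.piFinset fun j => if j ∈ D then {v j} else univ := by
  ext x
  simp only [mem_subcube, Fintype.mem_piFinset]
  refine forall_congr' fun j => ?_
  split_ifs with hj <;> simp [hj]

lemma card_subcube (D : Finset (Fin n)) (v : Fin n → Bool) :
    #(subcube D v) = 2 ^ (n - #D) := by
  rw [subcube_eq_piFinset, Fintype.card_piFinset]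
  simp only [apply_ite card, card_singleton, card_univ, Fintype.card_bool, prod_ite,
    prod_const_one, one_mul, prod_const, filter_not, filter_mem_eq_inter, univ_inter]
  rw [card_sdiff_of_subset (subset_univ D), card_univ, Fintype.card_fin]

lemma two_pow_sub_card_div (D : Finset (Fin n)) :
    (2 : ℝ) ^ (n - #D) / 2 ^ n = (2 ^ #D)⁻¹ := by
  rw [pow_sub₀ _ two_ne_zero (card_finset_fin_le D), mul_div_right_comm,
    div_self (by positivity), one_mul]

lemma sum_chi_subcube (S D : Finset (Fin n)) (v : Fin n → Bool) :
    ∑ x ∈ subcube D v, chi S x = if S ⊆ D then 2 ^ (n - #D) * chi S v else 0 := by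
  split_ifs with hSD
  · have hconst : ∀ x ∈ subcube D v, chi S x = chi S v := fun x hx =>
      prod_congr rfl fun j hj => by rw [mem_subcube.1 hx j (hSD hj)]
    rw [sum_congr rfl hconst, sum_const, card_subcube, nsmul_eq_mul]
    push_cast
    ring
  · -- flipping a coordinate of `S` outside `D` pairs up points with opposite characters
    obtain ⟨j, hjS, hjD⟩ := not_subset.1 hSD
    refine sum_involution (fun x _ => Function.update x j (!x j)) (fun x _ => ?_)
      (fun x _ _ h => ?_) (fun x hx => ?_) (fun x _ => ?_)
    · rw [chi_update_not hjS, add_neg_cancel]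
    · simpa using congrFun h j
    · simp only [mem_subcube] at hx ⊢
      exact fun i hi => (Function.update_of_ne (ne_of_mem_of_not_mem hi hjD) _ _).trans (hx i hi)
    · simp

end Subcube

section Certificate

variable {n : ℕ} {ι : Type*} [Fintype ι] {dom : ι → Finset (Fin n)} {val : ι → Fin n → Bool}
  {cell : (Fin n → Bool) → ι}

/-- Equals `min {#(dom i) | S ⊆ dom i}` (or `n` if there is no such `i`); counting the levels
`k` below it makes the layer-cake exchange of sums immediate. -/
def minCodim (dom : ι → Finset (Fin n)) (S : Finset (Fin n)) : ℕ :=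
  #{k ∈ range n | ∀ i, S ⊆ dom i → k < #(dom i)}

lemma exists_card_dom_le_minCodim {S : Finset (Fin n)} (h : ∃ i, S ⊆ dom i) :
    ∃ i, S ⊆ dom i ∧ #(dom i) ≤ minCodim dom S := by
  obtain ⟨i₀, hi₀, hmin⟩ := exists_min_image {i | S ⊆ dom i} (fun i => #(dom i))
    (by obtain ⟨i, hi⟩ := h; exact ⟨i, by simpa using hi⟩)
  refine ⟨i₀, (mem_filter.1 hi₀).2, ?_⟩
  calc #(dom i₀) = #(range #(dom i₀)) := (card_range _).symm
    _ ≤ minCodim dom S := card_le_card fun k hk => by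
        rw [mem_range] at hk
        exact mem_filter.2 ⟨mem_range.2 (hk.trans_le (card_finset_fin_le _)),
          fun i hi => hk.trans_le (hmin i (mem_filter.2 ⟨mem_univ i, hi⟩))⟩

noncomputable def cubeWeight (dom : ι → Finset (Fin n)) (S : Finset (Fin n)) : ℝ :=
  ∑ i with S ⊆ dom i, ((2 : ℝ) ^ #(dom i))⁻¹ ^ 2

lemma cubeWeight_nonneg (dom : ι → Finset (Fin n)) (S : Finset (Fin n)) :
    0 ≤ cubeWeight dom S :=
  sum_nonneg fun _ _ => by positivity

lemma inv_two_pow_sq_le_cubeWeight {S : Finset (Fin n)} {i₀ : ι} (h : S ⊆ dom i₀) :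
    ((2 : ℝ) ^ #(dom i₀))⁻¹ ^ 2 ≤ cubeWeight dom S :=
  single_le_sum (f := fun i => ((2 : ℝ) ^ #(dom i))⁻¹ ^ 2) (fun _ _ => by positivity)
    (mem_filter.2 ⟨mem_univ _, h⟩)

lemma sum_cubeWeight (dom : ι → Finset (Fin n)) :
    ∑ S, cubeWeight dom S = ∑ i, ((2 : ℝ) ^ #(dom i))⁻¹ := by
  simp only [cubeWeight, sum_filter]
  rw [sum_comm]
  refine sum_congr rfl fun i _ => ?_
  have hpow : ({S | S ⊆ dom i} : Finset (Finset (Fin n))) = (dom i).powerset := by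
    ext S; simp
  rw [← sum_filter, hpow, sum_const, card_powerset, nsmul_eq_mul, Nat.cast_pow, Nat.cast_ofNat]
  field_simp

lemma logb_inv_cubeWeight_le {S : Finset (Fin n)} {i₀ : ι} (h : S ⊆ dom i₀) :
    Real.logb 2 (1 / cubeWeight dom S) ≤ 2 * #(dom i₀) := by
  have hterm := inv_two_pow_sq_le_cubeWeight h
  calc Real.logb 2 (1 / cubeWeight dom S)
      ≤ Real.logb 2 (2 ^ (2 * #(dom i₀))) := by
        refine Real.logb_le_logb_of_le one_lt_two
          (one_div_pos.2 (lt_of_lt_of_le (by positivity) hterm)) ?_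
        calc 1 / cubeWeight dom S
            ≤ 1 / ((2 : ℝ) ^ #(dom i₀))⁻¹ ^ 2 := one_div_le_one_div_of_le (by positivity) hterm
          _ = 2 ^ (2 * #(dom i₀)) := by rw [inv_pow, one_div, inv_inv, ← pow_mul, mul_comm]
    _ = 2 * #(dom i₀) := by
        rw [Real.logb_pow, Real.logb_self_eq_one one_lt_two]
        push_cast
        ring

variable (hcell : ∀ x i, cell x = i ↔ x ∈ subcube (dom i) (val i))
include hcell

lemma sum_eq_sum_subcube (G : ι → (Fin n → Bool) → ℝ) :
    ∑ x, G (cell x) x = ∑ i, ∑ x ∈ subcube (dom i) (val i), G i x := by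
  classical
  rw [← sum_fiberwise univ cell]
  refine sum_congr rfl fun i _ => ?_
  have hfiber : ({x | cell x = i} : Finset _) = subcube (dom i) (val i) := by
    ext x; simp [hcell]
  rw [hfiber]
  exact sum_congr rfl fun x hx => by rw [(hcell x i).2 hx]

lemma sum_comp_cell_div (w : ι → ℝ) :
    (∑ x, w (cell x)) / 2 ^ n = ∑ i, w i / 2 ^ #(dom i) := by
  rw [sum_eq_sum_subcube hcell fun i _ => w i, sum_div]
  refine sum_congr rfl fun i _ => ?_
  rw [sum_const, card_subcube, nsmul_eq_mul, mul_div_right_comm, Nat.cast_pow, Nat.cast_ofNat,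
    two_pow_sub_card_div, div_eq_inv_mul]

lemma sum_inv_two_pow_card_dom : ∑ i, ((2 : ℝ) ^ #(dom i))⁻¹ = 1 := by
  have := sum_comp_cell_div hcell fun _ => (1 : ℝ)
  simp only [sum_const, card_univ, Fintype.card_fun, Fintype.card_bool, Fintype.card_fin,
    nsmul_eq_mul, mul_one, Nat.cast_pow, Nat.cast_ofNat, one_div] at this
  rw [← this, div_self (by positivity)]

lemma fCoeff_comp_cell (w : ι → ℝ) (S : Finset (Fin n)) :
    fCoeff (fun x => w (cell x)) S = ∑ i with S ⊆ dom i, w i * chi S (val i) / 2 ^ #(dom i) := by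
  rw [fCoeff, sum_eq_sum_subcube hcell fun i x => w i * chi S x, sum_div, sum_filter]
  refine sum_congr rfl fun i _ => ?_
  rw [← mul_sum, sum_chi_subcube]
  split_ifs
  · rw [div_eq_mul_inv (w i * chi S (val i)), ← two_pow_sub_card_div]; ring
  · simp

lemma exists_subset_dom_of_fCoeff_ne_zero {b : ι → ℝ} {S : Finset (Fin n)}
    (h : fCoeff (fun x => b (cell x)) S ≠ 0) : ∃ i, S ⊆ dom i := by
  by_contra! hS
  exact h (by rw [fCoeff_comp_cell hcell, filter_false_of_mem fun i _ => hS i, sum_empty])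

lemma sum_fCoeff_sq_le_of_forall_subset_dom {b : ι → ℝ} (hb : ∀ i, b i ^ 2 ≤ 1)
    (P : ι → Prop) [DecidablePred P] :
    ∑ S with ∀ i, S ⊆ dom i → P i, fCoeff (fun x => b (cell x)) S ^ 2
      ≤ ∑ i with P i, ((2 : ℝ) ^ #(dom i))⁻¹ := by
  set w : ι → ℝ := fun i => if P i then b i else 0
  have hcoeff : ∀ S ∈ ({S | ∀ i, S ⊆ dom i → P i} : Finset _),
      fCoeff (fun x => b (cell x)) S = fCoeff (fun x => w (cell x)) S := by
    intro S hS
    rw [fCoeff_comp_cell hcell, fCoeff_comp_cell hcell]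
    refine sum_congr rfl fun i hi => ?_
    rw [show w i = b i from if_pos ((mem_filter.1 hS).2 i (mem_filter.1 hi).2)]
  calc ∑ S with ∀ i, S ⊆ dom i → P i, fCoeff (fun x => b (cell x)) S ^ 2
      = ∑ S with ∀ i, S ⊆ dom i → P i, fCoeff (fun x => w (cell x)) S ^ 2 :=
        sum_congr rfl fun S hS => by rw [hcoeff S hS]
    _ ≤ (∑ x, w (cell x) ^ 2) / 2 ^ n := sum_fCoeff_sq_le _ _
    _ = ∑ i, w i ^ 2 / 2 ^ #(dom i) := sum_comp_cell_div hcell fun i => w i ^ 2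
    _ ≤ ∑ i, if P i then ((2 : ℝ) ^ #(dom i))⁻¹ else 0 := sum_le_sum fun i _ => by
        by_cases hi : P i <;> simp [w, hi, div_le_iff₀, hb i]
    _ = ∑ i with P i, ((2 : ℝ) ^ #(dom i))⁻¹ := (sum_filter _ _).symm

lemma sum_fCoeff_sq_mul_minCodim_le {b : ι → ℝ} (hb : ∀ i, b i ^ 2 ≤ 1) :
    ∑ S, fCoeff (fun x => b (cell x)) S ^ 2 * minCodim dom S
      ≤ ∑ i, ((2 : ℝ) ^ #(dom i))⁻¹ * #(dom i) := by
  set p := fun S => fCoeff (fun x => b (cell x)) S ^ 2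
  have hlevel : ∀ i, #{k ∈ range n | k < #(dom i)} = #(dom i) := fun i => by
    have hn : #(dom i) ≤ n := card_finset_fin_le _
    have : ({k ∈ range n | k < #(dom i)} : Finset ℕ) = range #(dom i) := by
      ext k
      simp only [mem_filter, mem_range]
      omega
    rw [this, card_range]
  calc ∑ S, p S * minCodim dom S
      = ∑ k ∈ range n, ∑ S with ∀ i, S ⊆ dom i → k < #(dom i), p S := by
        simp only [minCodim, natCast_card_filter, mul_sum, sum_filter]
        rw [sum_comm]
        simp
    _ ≤ ∑ k ∈ range n, ∑ i with k < #(dom i), ((2 : ℝ) ^ #(dom i))⁻¹ :=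
        sum_le_sum fun k _ => sum_fCoeff_sq_le_of_forall_subset_dom hcell hb _
    _ = ∑ i, ((2 : ℝ) ^ #(dom i))⁻¹ * #(dom i) := by
        simp only [sum_filter]
        rw [sum_comm]
        refine sum_congr rfl fun i _ => ?_
        rw [← sum_filter, sum_const, hlevel, nsmul_eq_mul, mul_comm]

theorem fEntropy_comp_cell_le {b : ι → ℝ} (hb : ∀ i, b i ^ 2 = 1) :
    fEntropy (fun x => b (cell x)) ≤ 2 * ∑ i, ((2 : ℝ) ^ #(dom i))⁻¹ * #(dom i) := by
  set p := fun S => fCoeff (fun x => b (cell x)) S ^ 2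
  have hp : ∑ S, p S = 1 := by
    rw [sum_fCoeff_sq, sum_comp_cell_div hcell fun i => b i ^ 2]
    simp only [hb, one_div, sum_inv_two_pow_card_dom hcell]
  have hq : ∑ S, cubeWeight dom S = 1 :=
    (sum_cubeWeight dom).trans (sum_inv_two_pow_card_dom hcell)
  have hsupp : ∀ S, p S ≠ 0 → ∃ i, S ⊆ dom i ∧ #(dom i) ≤ minCodim dom S := fun S hS =>
    exists_card_dom_le_minCodim (exists_subset_dom_of_fCoeff_ne_zero hcell (pow_ne_zero_iff
      two_ne_zero |>.1 hS))
  calc fEntropy (fun x => b (cell x))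
      ≤ ∑ S, p S * Real.logb 2 (1 / cubeWeight dom S) := by
        refine sum_mul_logb_inv_le univ one_lt_two (fun S _ => sq_nonneg _)
          (fun S _ => cubeWeight_nonneg dom S) (fun S _ hS => ?_) (by rw [hp, hq])
        obtain ⟨i, hi, -⟩ := hsupp S hS
        exact (lt_of_lt_of_le (by positivity) (inv_two_pow_sq_le_cubeWeight hi)).ne'
    _ ≤ ∑ S, p S * (2 * minCodim dom S) := sum_le_sum fun S _ => by
        rcases eq_or_ne (p S) 0 with hS | hS
        · simp [hS]
        obtain ⟨i, hi, hmin⟩ := hsupp S hS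
        refine mul_le_mul_of_nonneg_left ?_ (sq_nonneg _)
        exact (logb_inv_cubeWeight_le hi).trans (by gcongr)
    _ = 2 * ∑ S, p S * minCodim dom S := by
        rw [mul_sum]
        exact sum_congr rfl fun S _ => by ring
    _ ≤ 2 * ∑ i, ((2 : ℝ) ^ #(dom i))⁻¹ * #(dom i) := by
        gcongr
        exact sum_fCoeff_sq_mul_minCodim_le hcell fun i => (hb i).le

end Certificate

/-- Let `𝒞` be an unambiguous certificate for `f`: a family of subcubes
(cube `i` consisting of the points agreeing with the partial assignment fixing the
coordinates in `dom i` to the values `val i`) that partitions `{-1,1}^n` (every point lies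
in exactly one cube) and on each of which `f` is constant.  Then
`H(f̂²) ≤ 2 · aUC(f,𝒞)` where `aUC(f,𝒞) = Σ_i 2^{-|dom i|}·|dom i|` is the expected number
of coordinates fixed by the certificate containing a uniformly random input.
(In particular, minimizing over `𝒞`, `H(f̂²) ≤ 2·aUC(f)`.) -/
theorem stmt6 {n t : ℕ} (f : (Fin n → Bool) → ℝ) (hf : IsBooleanFunc f)
    (dom : Fin t → Finset (Fin n)) (val : Fin t → Fin n → Bool)
    (hpart : ∀ x : Fin n → Bool, ∃! i : Fin t, ∀ j ∈ dom i, x j = val i j)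
    (hmono : ∀ i : Fin t, ∀ x y : Fin n → Bool,
      (∀ j ∈ dom i, x j = val i j) → (∀ j ∈ dom i, y j = val i j) → f x = f y) :
    fEntropy f ≤ 2 * ∑ i : Fin t, (2 : ℝ) ^ (-((dom i).card : ℤ)) * ((dom i).card : ℝ) := by
  obtain ⟨cell, hcell⟩ : ∃ cell : (Fin n → Bool) → Fin t,
      ∀ x i, cell x = i ↔ x ∈ subcube (dom i) (val i) := by
    simpa only [mem_subcube] using exists_eq_iff_of_existsUnique hpart
  have hf_cell : f = fun x => f (val (cell x)) := funext fun x =>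
    hmono (cell x) x (val (cell x)) (mem_subcube.1 ((hcell x _).1 rfl)) fun _ _ => rfl
  have hb : ∀ i, f (val i) ^ 2 = 1 := fun i => by rcases hf (val i) with h | h <;> simp [h]
  calc fEntropy f = fEntropy fun x => f (val (cell x)) := congrArg fEntropy hf_cell
    _ ≤ 2 * ∑ i, ((2 : ℝ) ^ #(dom i))⁻¹ * #(dom i) :=
        fEntropy_comp_cell_le (b := fun i => f (val i)) hcell hb
    _ = 2 * ∑ i : Fin t, (2 : ℝ) ^ (-((dom i).card : ℤ)) * ((dom i).card : ℝ) := by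
        simp only [zpow_neg, zpow_natCast]
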